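/- Let X² be a χ²₁ random variable and define g(s) = E(X² | X² > s) for s > 0. Then for every s₀ > 0 there exists a constant C > 0 (depending only on s₀) such that for all s₁, s₂ ≥ s₀, |g(s₁) − g(s₂)| ≤ C·|s₁ − s₂|; that is, the conditional mean s ↦ E(X² | X² > s) is locally Lipschitz on any interval bounded away from zero. -/

import Mathlib

/-!
Write `f` for the density and `F(s) = ∫_s^∞ f`. The quotient rule gives
`g'(s) = f(s) · ∫_s^∞ (x - s) f(x) dx / F(s)²`. Beyond `s` the density is at most
`e^{-x/2} / √(2πs)`, so the integral in the numerator is at most `4 f(s)`, while `F(s) ≥ f(s + 1)`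
because `f` decreases. Hence `0 ≤ g'(s) ≤ 4 f(s)² / f(s + 1)² = 4e(1 + 1/s)`, which is bounded on
`[s₀, ∞)`, and the mean value inequality concludes.
-/

open MeasureTheory

/-- The density of the χ²₁ distribution: `f(x) = (2πx)^{-1/2} e^{-x/2}` for `x > 0`. -/
noncomputable def chiSq1Density (x : ℝ) : ℝ :=
  Real.exp (-x / 2) / Real.sqrt (2 * Real.pi * x)

/-- The conditional mean `g(s) = E(X² | X² > s)` of a χ²₁ random variable above level `s`. -/
noncomputable def chiSq1CondMean (s : ℝ) : ℝ :=
  (∫ x in Set.Ioi s, x * chiSq1Density x) / (∫ x in Set.Ioi s, chiSq1Density x)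

open Set Real Filter Topology

section TailIntegral

variable {E : Type*} [NormedAddCommGroup E] [NormedSpace ℝ E] [CompleteSpace E]

theorem hasDerivAt_integral_Ioi {h : ℝ → E} {a s : ℝ} (has : a < s)
    (hint : IntegrableOn h (Ioi a)) (hmeas : StronglyMeasurableAtFilter h (𝓝 s))
    (hcont : ContinuousAt h s) :
    HasDerivAt (fun u => ∫ x in Ioi u, h x) (-h s) s := by
  have hsplit : ∀ u, a < u → ∫ x in Ioi u, h x = (∫ x in Ioi a, h x) - ∫ x in a..u, h x := by
    intro u hu
    rw [intervalIntegral.integral_of_le hu.le, ← Ioc_union_Ioi_eq_Ioi hu.le,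
      setIntegral_union (Ioc_disjoint_Ioi le_rfl) measurableSet_Ioi
        (hint.mono_set Ioc_subset_Ioi_self) (hint.mono_set (Ioi_subset_Ioi hu.le))]
    abel
  have hii : IntervalIntegrable h volume a s :=
    (intervalIntegrable_iff_integrableOn_Ioc_of_le has.le).2 (hint.mono_set Ioc_subset_Ioi_self)
  have hderiv := (intervalIntegral.integral_hasDerivAt_right hii hmeas hcont).const_sub
    (∫ x in Ioi a, h x)
  refine hderiv.congr_of_eventuallyEq ?_
  filter_upwards [eventually_gt_nhds has] with u hu using hsplit u hu

end TailIntegral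

section ExpTail

variable {c : ℝ}

theorem hasDerivAt_sub_add_mul_exp_neg_div (hc : c ≠ 0) (s x : ℝ) :
    HasDerivAt (fun x => -c * (x - s + c) * exp (-x / c)) ((x - s) * exp (-x / c)) x := by
  have hexp : HasDerivAt (fun x => exp (-x / c)) (exp (-x / c) * (-1 / c)) x :=
    (hasDerivAt_exp _).comp x ((hasDerivAt_neg x).div_const c)
  have hlin : HasDerivAt (fun x => -c * (x - s + c)) (-c) x := by
    simpa using (((hasDerivAt_id x).sub_const s).add_const c).const_mul (-c)
  refine (hlin.mul hexp).congr_deriv ?_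
  field_simp
  ring

theorem tendsto_sub_add_mul_exp_neg_div_atTop (hc : 0 < c) (s : ℝ) :
    Tendsto (fun x => -c * (x - s + c) * exp (-x / c)) atTop (𝓝 0) := by
  have hx : Tendsto (fun x : ℝ => x / c) atTop atTop := tendsto_id.atTop_div_const hc
  have h₁ := (tendsto_pow_mul_exp_neg_atTop_nhds_zero 1).comp hx
  have h₂ := tendsto_exp_neg_atTop_nhds_zero.comp hx
  convert (h₁.const_mul (-c ^ 2)).add (h₂.const_mul (-c * (c - s))) using 1
  · ext x
    simp only [Function.comp, pow_one, neg_div]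
    field_simp
    ring
  · simp

theorem integrableOn_Ioi_sub_mul_exp_neg_div (hc : 0 < c) (s : ℝ) :
    IntegrableOn (fun x => (x - s) * exp (-x / c)) (Ioi s) :=
  integrableOn_Ioi_deriv_of_nonneg' (fun x _ => hasDerivAt_sub_add_mul_exp_neg_div hc.ne' s x)
    (fun _ hx => mul_nonneg (sub_nonneg.2 hx.out.le) (exp_nonneg _))
    (tendsto_sub_add_mul_exp_neg_div_atTop hc s)

theorem integral_Ioi_sub_mul_exp_neg_div (hc : 0 < c) (s : ℝ) :
    ∫ x in Ioi s, (x - s) * exp (-x / c) = c ^ 2 * exp (-s / c) := by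
  rw [integral_Ioi_of_hasDerivAt_of_nonneg'
    (fun x _ => hasDerivAt_sub_add_mul_exp_neg_div hc.ne' s x)
    (fun _ hx => mul_nonneg (sub_nonneg.2 hx.out.le) (exp_nonneg _))
    (tendsto_sub_add_mul_exp_neg_div_atTop hc s)]
  ring

end ExpTail

section Density

variable {s x : ℝ}

theorem chiSq1Density_nonneg (x : ℝ) : 0 ≤ chiSq1Density x :=
  div_nonneg (exp_nonneg _) (sqrt_nonneg _)

theorem chiSq1Density_pos (hx : 0 < x) : 0 < chiSq1Density x :=
  div_pos (exp_pos _) (sqrt_pos.2 (by positivity))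

theorem measurable_chiSq1Density : Measurable chiSq1Density := by
  unfold chiSq1Density
  fun_prop

theorem continuousAt_chiSq1Density (hx : 0 < x) : ContinuousAt chiSq1Density x := by
  have : sqrt (2 * π * x) ≠ 0 := (sqrt_pos.2 (by positivity)).ne'
  unfold chiSq1Density
  fun_prop (disch := exact this)

theorem chiSq1Density_le_exp_div_sqrt (hs : 0 < s) (hsx : s ≤ x) :
    chiSq1Density x ≤ exp (-x / 2) / sqrt (2 * π * s) := by
  unfold chiSq1Density
  gcongr

theorem chiSq1Density_antitoneOn : AntitoneOn chiSq1Density (Ioi 0) := by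
  intro x hx y _ hxy
  unfold chiSq1Density
  have : 0 < x := hx
  gcongr

theorem chiSq1Density_sq (hx : 0 < x) : chiSq1Density x ^ 2 = exp (-x) / (2 * π * x) := by
  rw [chiSq1Density, div_pow, sq_sqrt (by positivity), ← exp_nat_mul]
  ring_nf

theorem chiSq1Density_sq_div_sq_add_one (hs : 0 < s) :
    chiSq1Density s ^ 2 / chiSq1Density (s + 1) ^ 2 = exp 1 * (1 + 1 / s) := by
  rw [chiSq1Density_sq hs, chiSq1Density_sq (by positivity),
    show -s = 1 + -(s + 1) by ring, exp_add]
  field_simp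

theorem integrableOn_Ioi_mul_chiSq1Density (hs : 0 < s) :
    IntegrableOn (fun x => x * chiSq1Density x) (Ioi s) := by
  have hdom : IntegrableOn (fun x => x * exp (-x / 2) / sqrt (2 * π * s)) (Ioi s) := by
    have := ((integrableOn_Ioi_sub_mul_exp_neg_div two_pos 0).mono_set
      (Ioi_subset_Ioi hs.le)).div_const (sqrt (2 * π * s))
    simp only [sub_zero] at this
    exact this
  refine hdom.mono' (measurable_id.mul measurable_chiSq1Density).aestronglyMeasurable ?_
  filter_upwards [ae_restrict_mem measurableSet_Ioi] with x hx
  have hx₀ : 0 < x := hs.trans hx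
  rw [norm_of_nonneg (mul_nonneg hx₀.le (chiSq1Density_nonneg x)), mul_div_assoc]
  exact mul_le_mul_of_nonneg_left (chiSq1Density_le_exp_div_sqrt hs hx.out.le) hx₀.le

theorem integrableOn_Ioi_chiSq1Density (hs : 0 < s) :
    IntegrableOn chiSq1Density (Ioi s) := by
  refine ((integrableOn_Ioi_mul_chiSq1Density hs).div_const s).mono'
    measurable_chiSq1Density.aestronglyMeasurable ?_
  filter_upwards [ae_restrict_mem measurableSet_Ioi] with x hx
  rw [norm_of_nonneg (chiSq1Density_nonneg x), le_div_iff₀ hs, mul_comm x]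
  exact mul_le_mul_of_nonneg_left hx.out.le (chiSq1Density_nonneg x)

end Density

section CondMean

variable {s : ℝ}

theorem chiSq1Density_add_one_le_integral_Ioi (hs : 0 < s) :
    chiSq1Density (s + 1) ≤ ∫ x in Ioi s, chiSq1Density x := by
  have hint := integrableOn_Ioi_chiSq1Density hs
  calc chiSq1Density (s + 1) = ∫ _ in Ioc s (s + 1), chiSq1Density (s + 1) := by simp
    _ ≤ ∫ x in Ioc s (s + 1), chiSq1Density x := by
        refine setIntegral_mono_on (by simp) (hint.mono_set Ioc_subset_Ioi_self)
          measurableSet_Ioc fun x hx => ?_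
        exact chiSq1Density_antitoneOn (hs.trans hx.1) (by simp; positivity) hx.2
    _ ≤ ∫ x in Ioi s, chiSq1Density x :=
        setIntegral_mono_set hint (.of_forall chiSq1Density_nonneg)
          Ioc_subset_Ioi_self.eventuallyLE

theorem integral_Ioi_sub_mul_chiSq1Density (hs : 0 < s) :
    ∫ x in Ioi s, (x - s) * chiSq1Density x =
      (∫ x in Ioi s, x * chiSq1Density x) - s * ∫ x in Ioi s, chiSq1Density x := by
  simp_rw [sub_mul]
  rw [integral_sub (integrableOn_Ioi_mul_chiSq1Density hs)
    ((integrableOn_Ioi_chiSq1Density hs).const_mul s), integral_const_mul]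

theorem integral_Ioi_sub_mul_chiSq1Density_le (hs : 0 < s) :
    ∫ x in Ioi s, (x - s) * chiSq1Density x ≤ 4 * chiSq1Density s := by
  calc ∫ x in Ioi s, (x - s) * chiSq1Density x
      ≤ ∫ x in Ioi s, (x - s) * exp (-x / 2) / sqrt (2 * π * s) := by
        refine integral_mono_of_nonneg ?_
          ((integrableOn_Ioi_sub_mul_exp_neg_div two_pos s).div_const _) ?_
        all_goals filter_upwards [ae_restrict_mem measurableSet_Ioi] with x hx
        · exact mul_nonneg (sub_nonneg.2 hx.out.le) (chiSq1Density_nonneg x)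
        · rw [mul_div_assoc]
          exact mul_le_mul_of_nonneg_left (chiSq1Density_le_exp_div_sqrt hs hx.out.le)
            (sub_nonneg.2 hx.out.le)
    _ = 4 * chiSq1Density s := by
        rw [integral_div, integral_Ioi_sub_mul_exp_neg_div two_pos, chiSq1Density]
        ring

theorem hasDerivAt_chiSq1CondMean (hs : 0 < s) :
    HasDerivAt chiSq1CondMean
      (chiSq1Density s * (∫ x in Ioi s, (x - s) * chiSq1Density x) /
        (∫ x in Ioi s, chiSq1Density x) ^ 2) s := by
  have hs₂ : s / 2 < s := half_lt_self hs
  have hN := hasDerivAt_integral_Ioi hs₂ (integrableOn_Ioi_mul_chiSq1Density (half_pos hs))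
    (measurable_id.mul measurable_chiSq1Density).stronglyMeasurable.stronglyMeasurableAtFilter
    (continuousAt_id.mul (continuousAt_chiSq1Density hs))
  have hF := hasDerivAt_integral_Ioi hs₂ (integrableOn_Ioi_chiSq1Density (half_pos hs))
    measurable_chiSq1Density.stronglyMeasurable.stronglyMeasurableAtFilter
    (continuousAt_chiSq1Density hs)
  have hF₀ : 0 < ∫ x in Ioi s, chiSq1Density x :=
    (chiSq1Density_pos (by positivity)).trans_le (chiSq1Density_add_one_le_integral_Ioi hs)
  refine (hN.div hF hF₀.ne').congr_deriv ?_
  rw [integral_Ioi_sub_mul_chiSq1Density hs]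
  ring

theorem abs_deriv_chiSq1CondMean_le (hs : 0 < s) :
    |deriv chiSq1CondMean s| ≤ 4 * exp 1 * (1 + 1 / s) := by
  have hf₁ : 0 < chiSq1Density (s + 1) := chiSq1Density_pos (by positivity)
  have hF := chiSq1Density_add_one_le_integral_Ioi hs
  have hI₀ : 0 ≤ ∫ x in Ioi s, (x - s) * chiSq1Density x :=
    setIntegral_nonneg measurableSet_Ioi fun x hx =>
      mul_nonneg (sub_nonneg.2 (le_of_lt hx)) (chiSq1Density_nonneg x)
  have hI := integral_Ioi_sub_mul_chiSq1Density_le hs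
  have hf := chiSq1Density_nonneg s
  rw [(hasDerivAt_chiSq1CondMean hs).deriv, abs_of_nonneg (by positivity)]
  calc chiSq1Density s * (∫ x in Ioi s, (x - s) * chiSq1Density x) /
        (∫ x in Ioi s, chiSq1Density x) ^ 2
      ≤ chiSq1Density s * (4 * chiSq1Density s) / chiSq1Density (s + 1) ^ 2 := by gcongr
    _ = 4 * exp 1 * (1 + 1 / s) := by
        rw [mul_assoc, ← chiSq1Density_sq_div_sq_add_one hs]
        ring

end CondMean

/-- **Local Lipschitz continuity of the conditional mean.**  For every `s₀ > 0` there is a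
constant `C > 0` (depending only on `s₀`) such that for all `s₁, s₂ ≥ s₀`,
`|E(X² | X² > s₁) − E(X² | X² > s₂)| ≤ C |s₁ − s₂|`. -/
theorem chiSq1CondMean_locally_lipschitz (s₀ : ℝ) (hs₀ : 0 < s₀) :
    ∃ C : ℝ, 0 < C ∧
      ∀ s₁ s₂ : ℝ, s₀ ≤ s₁ → s₀ ≤ s₂ →
        |chiSq1CondMean s₁ - chiSq1CondMean s₂| ≤ C * |s₁ - s₂| := by
  refine ⟨4 * exp 1 * (1 + 1 / s₀), by positivity, fun s₁ s₂ h₁ h₂ => ?_⟩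
  have hdiff : ∀ s ∈ Ici s₀, DifferentiableAt ℝ chiSq1CondMean s :=
    fun s hs => (hasDerivAt_chiSq1CondMean (hs₀.trans_le hs)).differentiableAt
  have hbound : ∀ s ∈ Ici s₀, ‖deriv chiSq1CondMean s‖ ≤ 4 * exp 1 * (1 + 1 / s₀) := by
    intro s (hs : s₀ ≤ s)
    calc ‖deriv chiSq1CondMean s‖ ≤ 4 * exp 1 * (1 + 1 / s) :=
          abs_deriv_chiSq1CondMean_le (hs₀.trans_le hs)
      _ ≤ 4 * exp 1 * (1 + 1 / s₀) := by gcongr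
  simpa only [norm_eq_abs] using
    (convex_Ici s₀).norm_image_sub_le_of_norm_deriv_le hdiff hbound h₂ h₁
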